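/- arXiv:1702.00522 — 4 statements merged into one kernel-verified Lean document; each statement's English description precedes it below -/
import Mathlib

section
/- Let P be a symmetric convex polygon with vertices P_1,...,P_{2n} (P_{i+n}=-P_i, [P_i,P_{i+1}]>0, [∇P_i,ΔP_i]>0) and Q_i = ΔP_i/[P_i,P_{i+1}] its dual. Then [Q_{i-1}, Q_i] > 0 for all i, i.e., the dual polygon is also positively oriented. -/
/-- Determinant of the 2×2 matrix with columns `v` and `w`. -/
noncomputable def det2 (v w : ℝ × ℝ) : ℝ := v.1 * w.2 - v.2 * w.1

theorem det2_smul_smul (a b : ℝ) (v w : ℝ × ℝ) :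
    det2 (a • v) (b • w) = a * b * det2 v w := by
  simp only [det2, Prod.smul_fst, Prod.smul_snd, smul_eq_mul]
  ring

theorem stmt_1_general (P Q : ℤ → ℝ × ℝ)
    (hconv : ∀ i, 0 < det2 (P i) (P (i + 1)))
    (hloc : ∀ i, 0 < det2 (P i - P (i - 1)) (P (i + 1) - P i))
    (hQ : ∀ i, Q i = (det2 (P i) (P (i + 1)))⁻¹ • (P (i + 1) - P i)) :
    ∀ i, 0 < det2 (Q (i - 1)) (Q i) := by
  intro i
  rw [hQ, hQ, det2_smul_smul, sub_add_cancel]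
  have hprev := hconv (i - 1)
  rw [sub_add_cancel] at hprev
  exact mul_pos (mul_pos (inv_pos.2 hprev) (inv_pos.2 (hconv i))) (hloc i)

theorem stmt_1 (n : ℕ) (hn : 0 < n) (P Q : ℤ → ℝ × ℝ)
    (hper : ∀ i, P (i + 2 * n) = P i)
    (hconv : ∀ i, 0 < det2 (P i) (P (i + 1)))
    (hloc : ∀ i, 0 < det2 (P i - P (i - 1)) (P (i + 1) - P i))
    (hsym : ∀ i, P (i + n) = -P i)
    (hQ : ∀ i, Q i = (det2 (P i) (P (i + 1)))⁻¹ • (P (i + 1) - P i)) :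
    ∀ i, 0 < det2 (Q (i - 1)) (Q i) :=
  stmt_1_general P Q hconv hloc hQ
end

section
/- Let P be a symmetric convex 2n-gon and let M be a P-polygon with curvature radii r_i (so ΔM_i = r_i·ΔP_i) and support numbers h_i = [M_i, Q_i]. Then r_i = h_i + β_i·∇_i(α·Δh), where α_i = 1/[Q_i,Q_{i+1}], β_i = 1/[P_i,P_{i+1}], i.e., the radii depend linearly on the support function via this explicit formula. -/
lemma det2_self (v : ℝ × ℝ) : det2 v v = 0 := by
  simp only [det2]; ring

lemma det2_swap (v w : ℝ × ℝ) : det2 w v = -det2 v w := by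
  simp only [det2]; ring

lemma det2_smul_left (v w : ℝ × ℝ) (s : ℝ) : det2 (s • v) w = s * det2 v w := by
  simp only [det2, Prod.smul_fst, Prod.smul_snd, smul_eq_mul]; ring

lemma det2_smul_right (v w : ℝ × ℝ) (s : ℝ) : det2 v (s • w) = s * det2 v w := by
  simp only [det2, Prod.smul_fst, Prod.smul_snd, smul_eq_mul]; ring

lemma det2_sub_right (v w u : ℝ × ℝ) : det2 v (w - u) = det2 v w - det2 v u := by
  simp only [det2, Prod.fst_sub, Prod.snd_sub]; ring

lemma det2_add_left (v u w : ℝ × ℝ) : det2 (v + u) w = det2 v w + det2 u w := by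
  simp only [det2, Prod.fst_add, Prod.snd_add]; ring

lemma det2_neg_right (v w : ℝ × ℝ) : det2 v (-w) = -det2 v w := by
  simp only [det2, Prod.fst_neg, Prod.snd_neg]; ring

/-- Cramer's rule in the plane. -/
lemma det2_smul_eq_sub (a b v : ℝ × ℝ) : det2 a b • v = det2 v b • a - det2 v a • b := by
  ext <;> simp only [det2, Prod.smul_fst, Prod.smul_snd, Prod.fst_sub, Prod.snd_sub,
    smul_eq_mul] <;> ring

lemma inv_det2_smul_sub_of_det2_eq_one {a b v : ℝ × ℝ} (ha : det2 v a = 1) (hb : det2 v b = 1)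
    (hab : det2 a b ≠ 0) : (det2 a b)⁻¹ • (b - a) = -v := by
  have hv : det2 a b • v = a - b := by rw [det2_smul_eq_sub, ha, hb, one_smul, one_smul]
  rw [← neg_sub, smul_neg, ← hv, inv_smul_smul₀ hab]

lemma det2_inv_smul_sub_left {p p' : ℝ × ℝ} (hp : det2 p p' ≠ 0) :
    det2 p ((det2 p p')⁻¹ • (p' - p)) = 1 := by
  rw [det2_smul_right, det2_sub_right, det2_self, sub_zero, inv_mul_cancel₀ hp]

lemma det2_inv_smul_sub_right {p p' : ℝ × ℝ} (hp : det2 p p' ≠ 0) :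
    det2 p' ((det2 p p')⁻¹ • (p' - p)) = 1 := by
  rw [det2_smul_right, det2_sub_right, det2_self, zero_sub, ← det2_swap,
    inv_mul_cancel₀ hp]

section DualPolygon

variable {P Q M : ℤ → ℝ × ℝ} {α β r h : ℤ → ℝ}

lemma det2_vertex_dual (hP : ∀ i, det2 (P i) (P (i + 1)) ≠ 0)
    (hβ : ∀ i, β i = (det2 (P i) (P (i + 1)))⁻¹) (hQ : ∀ i, Q i = β i • (P (i + 1) - P i))
    (i : ℤ) : det2 (P i) (Q i) = 1 := by
  rw [hQ, hβ]; exact det2_inv_smul_sub_left (hP i)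

lemma det2_succ_vertex_dual (hP : ∀ i, det2 (P i) (P (i + 1)) ≠ 0)
    (hβ : ∀ i, β i = (det2 (P i) (P (i + 1)))⁻¹) (hQ : ∀ i, Q i = β i • (P (i + 1) - P i))
    (i : ℤ) : det2 (P (i + 1)) (Q i) = 1 := by
  rw [hQ, hβ]; exact det2_inv_smul_sub_right (hP i)

lemma det2_dual_ne_zero (hP : ∀ i, det2 (P i) (P (i + 1)) ≠ 0)
    (hedge : ∀ i, det2 (P i - P (i - 1)) (P (i + 1) - P i) ≠ 0)
    (hβ : ∀ i, β i = (det2 (P i) (P (i + 1)))⁻¹) (hQ : ∀ i, Q i = β i • (P (i + 1) - P i))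
    (i : ℤ) : det2 (Q i) (Q (i + 1)) ≠ 0 := by
  have hturn := hedge (i + 1)
  rw [add_sub_cancel_right] at hturn
  rw [hQ, hQ, det2_smul_left, det2_smul_right, hβ, hβ]
  exact mul_ne_zero (inv_ne_zero (hP i)) (mul_ne_zero (inv_ne_zero (hP (i + 1))) hturn)

lemma alpha_smul_sub_dual (hP : ∀ i, det2 (P i) (P (i + 1)) ≠ 0)
    (hedge : ∀ i, det2 (P i - P (i - 1)) (P (i + 1) - P i) ≠ 0)
    (hβ : ∀ i, β i = (det2 (P i) (P (i + 1)))⁻¹) (hQ : ∀ i, Q i = β i • (P (i + 1) - P i))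
    (hα : ∀ i, α i = (det2 (Q i) (Q (i + 1)))⁻¹) (i : ℤ) :
    α i • (Q (i + 1) - Q i) = -P (i + 1) := by
  rw [hα]
  exact inv_det2_smul_sub_of_det2_eq_one (det2_succ_vertex_dual hP hβ hQ i)
    (det2_vertex_dual hP hβ hQ (i + 1)) (det2_dual_ne_zero hP hedge hβ hQ i)

lemma support_eq_det2_succ (hQ : ∀ i, Q i = β i • (P (i + 1) - P i))
    (hM : ∀ i, M (i + 1) - M i = r i • (P (i + 1) - P i)) (hh : ∀ i, h i = det2 (M i) (Q i))
    (i : ℤ) : h i = det2 (M (i + 1)) (Q i) := by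
  rw [hh, ← add_sub_cancel (M i) (M (i + 1)), hM, det2_add_left, hQ, det2_smul_left,
    det2_smul_right, det2_smul_right, det2_self, mul_zero, mul_zero, add_zero]

lemma alpha_mul_sub_support (hP : ∀ i, det2 (P i) (P (i + 1)) ≠ 0)
    (hedge : ∀ i, det2 (P i - P (i - 1)) (P (i + 1) - P i) ≠ 0)
    (hβ : ∀ i, β i = (det2 (P i) (P (i + 1)))⁻¹) (hQ : ∀ i, Q i = β i • (P (i + 1) - P i))
    (hα : ∀ i, α i = (det2 (Q i) (Q (i + 1)))⁻¹)
    (hM : ∀ i, M (i + 1) - M i = r i • (P (i + 1) - P i)) (hh : ∀ i, h i = det2 (M i) (Q i))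
    (i : ℤ) : α i * (h (i + 1) - h i) = det2 (P (i + 1)) (M (i + 1)) := by
  calc α i * (h (i + 1) - h i) = det2 (M (i + 1)) (α i • (Q (i + 1) - Q i)) := by
        rw [hh (i + 1), support_eq_det2_succ hQ hM hh i, det2_smul_right, det2_sub_right]
    _ = det2 (P (i + 1)) (M (i + 1)) := by
        rw [alpha_smul_sub_dual hP hedge hβ hQ hα, det2_neg_right, det2_swap, neg_neg]

lemma beta_mul_sub_det2_vertex (hP : ∀ i, det2 (P i) (P (i + 1)) ≠ 0)
    (hβ : ∀ i, β i = (det2 (P i) (P (i + 1)))⁻¹) (hQ : ∀ i, Q i = β i • (P (i + 1) - P i))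
    (hM : ∀ i, M (i + 1) - M i = r i • (P (i + 1) - P i)) (hh : ∀ i, h i = det2 (M i) (Q i))
    (i : ℤ) : β i * (det2 (P (i + 1)) (M (i + 1)) - det2 (P i) (M i)) = r i - h i := by
  have hstep : det2 (P (i + 1)) (M (i + 1)) - det2 (P i) (M i) =
      det2 (P (i + 1) - P i) (M i) + r i * det2 (P i) (P (i + 1)) := by
    rw [← add_sub_cancel (M i) (M (i + 1)), hM]
    simp only [det2, Prod.fst_add, Prod.snd_add, Prod.fst_sub, Prod.snd_sub, Prod.smul_fst,
      Prod.smul_snd, smul_eq_mul]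
    ring
  rw [hstep, mul_add, ← det2_smul_left, ← hQ, det2_swap, ← hh, hβ, mul_left_comm,
    inv_mul_cancel₀ (hP i), mul_one]
  ring

end DualPolygon

theorem stmt_4_general (P Q M : ℤ → ℝ × ℝ) (α β r h : ℤ → ℝ)
    (hconv : ∀ i, 0 < det2 (P i) (P (i + 1)))
    (hloc : ∀ i, 0 < det2 (P i - P (i - 1)) (P (i + 1) - P i))
    (hβ : ∀ i, β i = (det2 (P i) (P (i + 1)))⁻¹)
    (hQ : ∀ i, Q i = β i • (P (i + 1) - P i))
    (hα : ∀ i, α i = (det2 (Q i) (Q (i + 1)))⁻¹)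
    (hM : ∀ i, M (i + 1) - M i = r i • (P (i + 1) - P i))
    (hh : ∀ i, h i = det2 (M i) (Q i)) :
    ∀ i, r i = h i + β i * (α i * (h (i + 1) - h i) - α (i - 1) * (h i - h (i - 1))) := by
  have hP i := (hconv i).ne'
  have hedge i := (hloc i).ne'
  intro i
  have hnext := alpha_mul_sub_support hP hedge hβ hQ hα hM hh i
  have hprev := alpha_mul_sub_support hP hedge hβ hQ hα hM hh (i - 1)
  rw [sub_add_cancel] at hprev
  rw [hnext, hprev, beta_mul_sub_det2_vertex hP hβ hQ hM hh]
  ring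

theorem stmt_4 (n : ℕ) (hn : 0 < n) (P Q M : ℤ → ℝ × ℝ) (α β r h : ℤ → ℝ)
    (hper : ∀ i, P (i + 2 * n) = P i)
    (hconv : ∀ i, 0 < det2 (P i) (P (i + 1)))
    (hloc : ∀ i, 0 < det2 (P i - P (i - 1)) (P (i + 1) - P i))
    (hsym : ∀ i, P (i + n) = -P i)
    (hβ : ∀ i, β i = (det2 (P i) (P (i + 1)))⁻¹)
    (hQ : ∀ i, Q i = β i • (P (i + 1) - P i))
    (hα : ∀ i, α i = (det2 (Q i) (Q (i + 1)))⁻¹)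
    (hM : ∀ i, M (i + 1) - M i = r i • (P (i + 1) - P i))
    (hh : ∀ i, h i = det2 (M i) (Q i)) :
    ∀ i, r i = h i + β i * (α i * (h (i + 1) - h i) - α (i - 1) * (h i - h (i - 1))) :=
  stmt_4_general P Q M α β r h hconv hloc hβ hQ hα hM hh
end

section
/- Let P be a symmetric convex 2n-gon with dual Q, X ∈ ℝ² nonzero, and u_i = [X, Q_i]. Then the P-polygon with radii u does not close: the drift D = Σ_{i=1}^{2n} u_i ΔP_i satisfies [X, D] = Σ_{i=1}^{2n} [X,Q_i]²/β_i > 0, hence D ≠ 0. -/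
theorem stmt_14 (n : ℕ) (hn : 0 < n) (P Q : ℤ → ℝ × ℝ) (β u : ℤ → ℝ) (X D : ℝ × ℝ)
    (hper : ∀ i, P (i + 2 * n) = P i)
    (hconv : ∀ i, 0 < det2 (P i) (P (i + 1)))
    (hloc : ∀ i, 0 < det2 (P i - P (i - 1)) (P (i + 1) - P i))
    (hsym : ∀ i, P (i + n) = -P i)
    (hβ : ∀ i, β i = (det2 (P i) (P (i + 1)))⁻¹)
    (hQ : ∀ i, Q i = β i • (P (i + 1) - P i))
    (hX : X ≠ 0)
    (hu : ∀ i, u i = det2 X (Q i))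
    (hD : D = ∑ i ∈ Finset.range (2 * n), u i • (P (i + 1) - P i)) :
    det2 X D = ∑ i ∈ Finset.range (2 * n), (det2 X (Q i)) ^ 2 / β i ∧
      0 < det2 X D ∧ D ≠ 0 := by
  have hβpos : ∀ i, 0 < β i := fun i => by
    rw [hβ]; exact inv_pos.mpr (hconv i)
  -- det2 X Q i = β i * det2 X (ΔP i)
  have hQd : ∀ i : ℤ, det2 X (Q i) = β i * det2 X (P (i + 1) - P i) := by
    intro i
    rw [hQ]
    simp [det2, Prod.smul_fst, Prod.smul_snd, smul_eq_mul]
    ring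
  -- linearity of det2 X in second argument over the sum
  have h1 : det2 X D = ∑ i ∈ Finset.range (2 * n), u i * det2 X (P (i + 1) - P i) := by
    rw [hD]
    unfold det2
    rw [Prod.fst_sum, Prod.snd_sum, Finset.mul_sum, Finset.mul_sum, ← Finset.sum_sub_distrib]
    refine Finset.sum_congr rfl fun i _ => ?_
    simp [Prod.smul_fst, Prod.smul_snd, smul_eq_mul]
    ring
  have hterm : ∀ i : ℤ, u i * det2 X (P (i + 1) - P i)
      = (det2 X (Q i)) ^ 2 / β i := by
    intro i
    rw [hu, hQd i]
    have hb := (hβpos i).ne'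
    field_simp
  have hEq : det2 X D = ∑ i ∈ Finset.range (2 * n), (det2 X (Q i)) ^ 2 / β i := by
    rw [h1]; exact Finset.sum_congr rfl fun i _ => hterm i
  -- exists an index with det2 X (Q i) ≠ 0
  have hexists : ∃ i ∈ Finset.range (2 * n), det2 X (Q (i : ℤ)) ≠ 0 := by
    by_contra hcon
    push_neg at hcon
    have hd : ∀ i ∈ Finset.range (2 * n), det2 X (P ((i : ℤ) + 1) - P i) = 0 := by
      intro i hi
      have := hcon i hi
      rw [hQd i] at this
      exact (mul_eq_zero.mp this).resolve_left (hβpos i).ne'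
    -- telescoping: det2 X (P k) constant for k ≤ 2n
    have hg : ∀ k : ℕ, k ≤ 2 * n → det2 X (P k) = det2 X (P 0) := by
      intro k hk
      induction k with
      | zero => simp
      | succ m ih =>
        have hm : m < 2 * n := by omega
        have h0 := hd m (Finset.mem_range.mpr hm)
        have : det2 X (P ((m : ℤ) + 1)) = det2 X (P m) := by
          unfold det2 at h0 ⊢
          simp only [Prod.fst_sub, Prod.snd_sub] at h0
          linarith
        rw [show ((m + 1 : ℕ) : ℤ) = (m : ℤ) + 1 by push_cast; ring, this]
        exact ih (by omega)
    have hPn : (P (n : ℤ)) = -P 0 := by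
      have := hsym 0; simpa using this
    have hgn := hg n (by omega)
    rw [hPn] at hgn
    have hP0 : det2 X (P 0) = 0 := by
      unfold det2 at hgn ⊢
      simp only [Prod.fst_neg, Prod.snd_neg] at hgn
      linarith
    have hP1 : det2 X (P 1) = 0 := by
      have := hg 1 (by omega)
      simpa [hP0] using this
    -- then det2 (P 0) (P 1) = 0, contradiction
    have hc := hconv 0
    have key : det2 (P 0) (P (0 + 1)) * X.1 = 0 ∧ det2 (P 0) (P (0 + 1)) * X.2 = 0 := by
      unfold det2 at hP0 hP1 ⊢
      rw [show ((0:ℤ) + 1) = 1 from rfl]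
      constructor
      · linear_combination (P 0).1 * hP1 - (P 1).1 * hP0
      · linear_combination (P 0).2 * hP1 - (P 1).2 * hP0
    have hx1 : X.1 = 0 := by
      have := key.1
      rcases mul_eq_zero.mp this with h | h
      · exact absurd h hc.ne'
      · exact h
    have hx2 : X.2 = 0 := by
      have := key.2
      rcases mul_eq_zero.mp this with h | h
      · exact absurd h hc.ne'
      · exact h
    exact hX (Prod.ext hx1 hx2)
  have hpos : 0 < det2 X D := by
    rw [hEq]
    obtain ⟨i, hi, hne⟩ := hexists
    refine Finset.sum_pos' (fun j _ => ?_) ⟨i, hi, ?_⟩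
    · exact div_nonneg (sq_nonneg _) (hβpos j).le
    · have h2 : (0:ℝ) < (det2 X (Q (i:ℤ))) ^ 2 :=
        lt_of_le_of_ne (sq_nonneg _) (Ne.symm (pow_ne_zero 2 hne))
      exact div_pos h2 (hβpos i)
  refine ⟨hEq, hpos, ?_⟩
  intro h0
  rw [h0] at hpos
  simp [det2] at hpos
end

section
/- The operator T_P|_{S_P} and T_P|_{A_P} have no common eigenvalues, where S_P = {r ∈ ℝ^{2n} : r_{i+n}=r_i} and A_P = {r : r_{i+n}=-r_i}: if λ is an eigenvalue of T_P with an eigenvector in S_P and also with an eigenvector in A_P (both nonzero), a contradiction arises since the half-turn transform H_λ would have both 1 and -1 as eigenvalues while det H_λ = 1. -/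
/-!
The discrete Wronskian `W i = α i * (r i * s (i + 1) - r (i + 1) * s i)` of two solutions of
`T r = λ r` is independent of `i` (this is `det H_λ = 1`). For `r` symmetric and `s`
antisymmetric it changes sign under `i ↦ i + n`, so it vanishes. A vanishing Wronskian makes
`r` and `s` proportional, which is impossible for a nonzero symmetric and a nonzero
antisymmetric sequence.
-/

section

variable {K : Type*} [Field K]

/-- The operator `T_P` of the paper, acting on all sequences `ℤ → K`. -/
def jacobiOp (α β r : ℤ → K) (i : ℤ) : K :=
  -(β i) * (α i * (r (i + 1) - r i) - α (i - 1) * (r i - r (i - 1)))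

def wronskian (α r s : ℤ → K) (i : ℤ) : K :=
  α i * (r i * s (i + 1) - r (i + 1) * s i)

variable {α β r s : ℤ → K} {lam : K}

theorem jacobiOp_linearComb (a b : K) (i : ℤ) :
    jacobiOp α β (fun j => a * r j + b * s j) i = a * jacobiOp α β r i + b * jacobiOp α β s i := by
  unfold jacobiOp
  ring

theorem wronskian_add_one (hβ : ∀ i, β i ≠ 0)
    (hr : ∀ i, jacobiOp α β r i = lam * r i) (hs : ∀ i, jacobiOp α β s i = lam * s i) (i : ℤ) :
    wronskian α r s (i + 1) = wronskian α r s i := by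
  have hri := hr (i + 1)
  have hsi := hs (i + 1)
  unfold jacobiOp at hri hsi
  rw [add_sub_cancel_right] at hri hsi
  refine mul_left_cancel₀ (hβ (i + 1)) ?_
  unfold wronskian
  linear_combination (-r (i + 1)) * hsi + s (i + 1) * hri

theorem wronskian_eq (hβ : ∀ i, β i ≠ 0)
    (hr : ∀ i, jacobiOp α β r i = lam * r i) (hs : ∀ i, jacobiOp α β s i = lam * s i) (i j : ℤ) :
    wronskian α r s i = wronskian α r s j := by
  induction i using Int.inductionOn' (b := j) with
  | zero => rfl
  | succ k _ ih => rw [wronskian_add_one hβ hr hs, ih]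
  | pred k _ ih => rw [← ih, ← wronskian_add_one hβ hr hs, sub_add_cancel]

theorem wronskian_add_of_symm_of_antisymm {p : ℤ} (hαper : ∀ i, α (i + p) = α i)
    (hrsym : ∀ i, r (i + p) = r i) (hsasym : ∀ i, s (i + p) = -s i) (i : ℤ) :
    wronskian α r s (i + p) = -wronskian α r s i := by
  unfold wronskian
  rw [add_right_comm, hαper, hrsym, hrsym, hsasym, hsasym]
  ring

theorem eq_zero_of_consecutive_zeros (hα : ∀ i, α i ≠ 0) (hβ : ∀ i, β i ≠ 0) {u : ℤ → K}
    (hu : ∀ i, jacobiOp α β u i = lam * u i) {i₀ : ℤ} (h₀ : u i₀ = 0) (h₁ : u (i₀ + 1) = 0) :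
    ∀ i, u i = 0 := by
  suffices ∀ i, u i = 0 ∧ u (i + 1) = 0 from fun i => (this i).1
  intro i
  induction i using Int.inductionOn' (b := i₀) with
  | zero => exact ⟨h₀, h₁⟩
  | succ k _ ih =>
    have hk := hu (k + 1)
    unfold jacobiOp at hk
    rw [add_sub_cancel_right, ih.1, ih.2] at hk
    refine ⟨ih.2, ?_⟩
    have : β (k + 1) * α (k + 1) * u (k + 1 + 1) = 0 := by linear_combination -hk
    simpa [hα, hβ] using this
  | pred k _ ih =>
    have hk := hu k
    unfold jacobiOp at hk
    rw [ih.1, ih.2] at hk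
    refine ⟨?_, by rw [sub_add_cancel]; exact ih.1⟩
    have : β k * α (k - 1) * u (k - 1) = 0 := by linear_combination -hk
    simpa [hα, hβ] using this

theorem mul_eq_mul_of_wronskian_eq_zero (hα : ∀ i, α i ≠ 0) (hβ : ∀ i, β i ≠ 0)
    (hr : ∀ i, jacobiOp α β r i = lam * r i) (hs : ∀ i, jacobiOp α β s i = lam * s i)
    {i₀ : ℤ} (hW : wronskian α r s i₀ = 0) (i : ℤ) :
    r i₀ * s i = s i₀ * r i := by
  have hcross : r i₀ * s (i₀ + 1) - r (i₀ + 1) * s i₀ = 0 :=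
    (mul_eq_zero.mp hW).resolve_left (hα i₀)
  have hu : ∀ j, jacobiOp α β (fun j => r i₀ * s j + -s i₀ * r j) j
      = lam * (r i₀ * s j + -s i₀ * r j) := fun j => by
    rw [jacobiOp_linearComb, hr, hs]
    ring
  have hzero := eq_zero_of_consecutive_zeros hα hβ hu (i₀ := i₀) (by ring)
    (by linear_combination hcross)
  linear_combination hzero i

end

theorem stmt_17_general (n : ℕ) (α β : ℤ → ℝ)
    (hα : ∀ i, 0 < α i) (hβ : ∀ i, 0 < β i)
    (hαper : ∀ i, α (i + n) = α i)
    (lam : ℝ) (r s : ℤ → ℝ)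
    (hrsym : ∀ i, r (i + n) = r i)
    (hsasym : ∀ i, s (i + n) = -s i)
    (hre : ∀ i, -(β i) * (α i * (r (i + 1) - r i) - α (i - 1) * (r i - r (i - 1))) = lam * r i)
    (hse : ∀ i, -(β i) * (α i * (s (i + 1) - s i) - α (i - 1) * (s i - s (i - 1))) = lam * s i)
    (hr0 : ∃ i, r i ≠ 0) (hs0 : ∃ i, s i ≠ 0) :
    False := by
  obtain ⟨i₀, hri₀⟩ := hr0
  obtain ⟨j, hsj⟩ := hs0
  have hα' : ∀ i, α i ≠ 0 := fun i => (hα i).ne'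
  have hβ' : ∀ i, β i ≠ 0 := fun i => (hβ i).ne'
  have hW : wronskian α r s i₀ = 0 := by
    have hconst := wronskian_eq hβ' hre hse (i₀ + n) i₀
    have hflip := wronskian_add_of_symm_of_antisymm hαper hrsym hsasym i₀
    linarith
  have hprop := mul_eq_mul_of_wronskian_eq_zero hα' hβ' hre hse hW
  have hj := hprop j
  have hjn := hprop (j + n)
  rw [hrsym, hsasym] at hjn
  have : r i₀ * s j = 0 := by linarith
  exact hsj ((mul_eq_zero.mp this).resolve_left hri₀)

theorem stmt_17 (n : ℕ) (hn : 0 < n) (α β : ℤ → ℝ)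
    (hα : ∀ i, 0 < α i) (hβ : ∀ i, 0 < β i)
    (hαper : ∀ i, α (i + n) = α i) (hβper : ∀ i, β (i + n) = β i)
    (lam : ℝ) (r s : ℤ → ℝ)
    (hrsym : ∀ i, r (i + n) = r i)
    (hsasym : ∀ i, s (i + n) = -s i)
    (hre : ∀ i, -(β i) * (α i * (r (i + 1) - r i) - α (i - 1) * (r i - r (i - 1))) = lam * r i)
    (hse : ∀ i, -(β i) * (α i * (s (i + 1) - s i) - α (i - 1) * (s i - s (i - 1))) = lam * s i)
    (hr0 : ∃ i, r i ≠ 0) (hs0 : ∃ i, s i ≠ 0) :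
    False :=
  stmt_17_general n α β hα hβ hαper lam r s hrsym hsasym hre hse hr0 hs0
end
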